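/- Let j = e^{2πi/3} and define 2×2 complex matrices a = diag(1, -1), b = [[-j²/2, (j-1)/2],[(1-j)/2, j²/2]], c = conj(b) (entrywise complex conjugate), d = [[-3/2, 3/2],[-3/2, 3/2]]. Then a+b+c+d = 0, a²+b²+c²+d² = 0, a³+b³+c³+d³ = 0, a⁴+b⁴+c⁴+d⁴ = 0, and d is nilpotent while a, b, c are not. -/

import Mathlib

/-!
Each of `a, b, c, d` squares to a scalar: `a² = 1`, `b² = j`, `c² = j²`, `d² = 0`. Hence
`x³ = x² • x` and `x⁴ = (x²)²` reduce the power sums of order 2 and 4 to `1 + j + j² = 0`, and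
the one of order 3 to the linear identity `a + j • b + j² • c = 0`. Conjugation sends `j` to
`j² = j⁻¹`, so `c` is `b` with `j` replaced by `j²`.
-/

open Complex Matrix ComplexConjugate

section PowersOfSquareRootsOfScalars

variable {R A : Type*} [CommSemiring R] [Semiring A] [Algebra R A] {x : A} {s : R}

theorem pow_three_of_sq_eq_smul_one (h : x ^ 2 = s • 1) : x ^ 3 = s • x := by
  rw [pow_succ, h, smul_one_mul]

theorem pow_four_of_sq_eq_smul_one (h : x ^ 2 = s • 1) : x ^ 4 = s ^ 2 • 1 := by
  rw [show 4 = 2 * 2 from rfl, pow_mul, h, smul_pow, one_pow]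

end PowersOfSquareRootsOfScalars

theorem not_isNilpotent_of_sq_eq_smul_one {K A : Type*} [Field K] [Ring A] [Nontrivial A]
    [Algebra K A] {x : A} {s : K} (hs : s ≠ 0) (h : x ^ 2 = s • 1) : ¬ IsNilpotent x := by
  have hx : IsUnit (x ^ 2) := by
    rw [h, ← Algebra.algebraMap_eq_smul_one]
    exact hs.isUnit.map _
  exact ((isUnit_pow_iff two_ne_zero).mp hx).not_isNilpotent

theorem IsPrimitiveRoot.conj_eq_pow {ζ : ℂ} {n : ℕ} (h : IsPrimitiveRoot ζ n) (hn : n ≠ 0) :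
    conj ζ = ζ ^ (n - 1) := by
  rw [← Complex.inv_eq_conj (h.norm'_eq_one hn)]
  exact (eq_inv_of_mul_eq_one_left (by rw [pow_sub_one_mul hn, h.pow_eq_one])).symm

theorem IsPrimitiveRoot.sq_add_self_add_one {R : Type*} [CommRing R] [IsDomain R] {ζ : R}
    (h : IsPrimitiveRoot ζ 3) : ζ ^ 2 + ζ + 1 = 0 := by
  have hsum := h.geom_sum_eq_zero (by norm_num)
  simp only [Finset.sum_range_succ, Finset.sum_range_zero] at hsum
  linear_combination hsum

theorem sq_sq_add_sq_add_one_eq_zero {R : Type*} [CommRing R] {ω : R}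
    (hω : ω ^ 2 + ω + 1 = 0) : (ω ^ 2) ^ 2 + ω ^ 2 + 1 = 0 := by
  linear_combination (ω ^ 2 - ω + 1) * hω

theorem sq_diag_one_neg_one {R : Type*} [Ring R] : !![(1 : R), 0; 0, -1] ^ 2 = 1 := by
  rw [sq, Matrix.one_fin_two]
  simp

theorem sq_of_fin_two_neg_self_self {R : Type*} [CommRing R] (x : R) :
    !![-x, x; -x, x] ^ 2 = 0 := by
  rw [sq, Matrix.mul_fin_two]
  ext i k
  fin_cases i <;> fin_cases k <;> simp

section CubeRootMatrices

variable {K : Type*} [Field K]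

def bMat (ω : K) : Matrix (Fin 2) (Fin 2) K :=
  !![-(ω ^ 2) / 2, (ω - 1) / 2; (1 - ω) / 2, ω ^ 2 / 2]

theorem bMat_map {L : Type*} [Field L] (f : K →+* L) (ω : K) :
    (bMat ω).map f = bMat (f ω) := by
  ext i k
  fin_cases i <;> fin_cases k <;> simp [bMat, map_ofNat f 2]

variable [CharZero K] {ω : K} (hω : ω ^ 2 + ω + 1 = 0)
include hω

theorem bMat_sq : bMat ω ^ 2 = ω • 1 := by
  rw [sq]
  ext i k
  fin_cases i <;> fin_cases k <;> simp [bMat, Matrix.mul_apply, Fin.sum_univ_two]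
  all_goals grind

theorem diag_add_bMat_add_bMat_sq_add :
    !![1, 0; 0, -1] + bMat ω + bMat (ω ^ 2) + !![-(3 / 2), 3 / 2; -(3 / 2), 3 / 2] = 0 := by
  ext i k
  fin_cases i <;> fin_cases k <;> simp [bMat]
  all_goals grind

theorem diag_add_smul_bMat_add_sq_smul_bMat_sq :
    !![1, 0; 0, -1] + ω • bMat ω + ω ^ 2 • bMat (ω ^ 2) = 0 := by
  ext i k
  fin_cases i <;> fin_cases k <;> simp [bMat]
  all_goals grind

end CubeRootMatrices

theorem stmt16 (j : ℂ) (hj : j = Complex.exp (2 * Real.pi * Complex.I / 3))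
    (a b c d : Matrix (Fin 2) (Fin 2) ℂ)
    (ha : a = !![1, 0; 0, -1])
    (hb : b = !![-(j ^ 2) / 2, (j - 1) / 2; (1 - j) / 2, j ^ 2 / 2])
    (hc : c = b.map (starRingEnd ℂ))
    (hd : d = !![-(3 / 2), 3 / 2; -(3 / 2), 3 / 2]) :
    a + b + c + d = 0 ∧
    a ^ 2 + b ^ 2 + c ^ 2 + d ^ 2 = 0 ∧
    a ^ 3 + b ^ 3 + c ^ 3 + d ^ 3 = 0 ∧
    a ^ 4 + b ^ 4 + c ^ 4 + d ^ 4 = 0 ∧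
    IsNilpotent d ∧ ¬ IsNilpotent a ∧ ¬ IsNilpotent b ∧ ¬ IsNilpotent c := by
  have hprim : IsPrimitiveRoot j 3 := by
    rw [hj]
    exact_mod_cast Complex.isPrimitiveRoot_exp 3 three_ne_zero
  have hω := hprim.sq_add_self_add_one
  have hω' := sq_sq_add_sq_add_one_eq_zero hω
  have hb' : b = bMat j := hb
  have hc' : c = bMat (j ^ 2) := by rw [hc, hb', bMat_map, hprim.conj_eq_pow three_ne_zero]
  have ha2 : a ^ 2 = (1 : ℂ) • 1 := by rw [ha, sq_diag_one_neg_one, one_smul]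
  have hb2 : b ^ 2 = j • 1 := hb' ▸ bMat_sq hω
  have hc2 : c ^ 2 = j ^ 2 • 1 := hc' ▸ bMat_sq hω'
  have hd2 : d ^ 2 = (0 : ℂ) • 1 := by rw [hd, sq_of_fin_two_neg_self_self, zero_smul]
  have hj0 : j ≠ 0 := hprim.ne_zero three_ne_zero
  refine ⟨?_, ?_, ?_, ?_, ⟨2, by rw [hd2, zero_smul]⟩,
    not_isNilpotent_of_sq_eq_smul_one one_ne_zero ha2,
    not_isNilpotent_of_sq_eq_smul_one hj0 hb2,
    not_isNilpotent_of_sq_eq_smul_one (pow_ne_zero 2 hj0) hc2⟩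
  · rw [ha, hb', hc', hd]
    exact diag_add_bMat_add_bMat_sq_add hω
  · rw [ha2, hb2, hc2, hd2, ← add_smul, ← add_smul, ← add_smul,
      show 1 + j + j ^ 2 + 0 = 0 by linear_combination hω, zero_smul]
  · rw [pow_three_of_sq_eq_smul_one ha2, pow_three_of_sq_eq_smul_one hb2,
      pow_three_of_sq_eq_smul_one hc2, pow_three_of_sq_eq_smul_one hd2, one_smul, zero_smul,
      add_zero, ha, hb', hc']
    exact diag_add_smul_bMat_add_sq_smul_bMat_sq hω
  · rw [pow_four_of_sq_eq_smul_one ha2, pow_four_of_sq_eq_smul_one hb2,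
      pow_four_of_sq_eq_smul_one hc2, pow_four_of_sq_eq_smul_one hd2, ← add_smul, ← add_smul,
      ← add_smul, show 1 ^ 2 + j ^ 2 + (j ^ 2) ^ 2 + 0 ^ 2 = 0 by linear_combination hω',
      zero_smul]
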